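/- arXiv:2005.02774 — 3 statements merged into one kernel-verified Lean document; each statement's English description precedes it below -/
import Mathlib

section
/- Let 𝔛 be a class of finite groups and suppose there exists a real number γ with 0 ≤ γ < 1 such that: for every finite group X, if the probability that two uniformly randomly chosen elements x, y of X satisfy ⟨x, y⟩ ∈ 𝔛 is greater than γ, then X ∈ 𝔛. Let m ≤ n be positive integers and let G be a finite group satisfying the condition 𝔛(m,n) but with G ∉ 𝔛. Then |G| ≤ (2/(1-γ))^m · (n-1). -/
/-!
Call `x` and `y` bad when `⟨x, y⟩ ∉ 𝔛`, and write `Q = |G|`. Since `G ∉ 𝔛`, at least `(1 - γ) Q²`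
pairs are bad, so by the power-mean inequality the number of pairs `(t, y)` with `t ∈ Gᵐ` and every
`(tᵢ, y)` bad is at least `(1 - γ)ᵐ Q^(m+1)`. On the other hand `𝔛(m, n)` says that an injective
`t` has fewer than `n` such `y`, and the non-injective `t` number at most `m(m - 1) Q^(m-1)`, so
there are at most `((n - 1) + m(m - 1)) Qᵐ ≤ 2ᵐ (n - 1) Qᵐ` such pairs (using `m ≤ n`).
-/

open Finset Function

section CommonNeighbors

variable {α : Type*} [Fintype α] (R : α → α → Prop) [DecidableRel R]

def commonNeighbors {m : ℕ} (t : Fin m → α) : Finset α := {y | ∀ i, R (t i) y}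

theorem sum_card_pow_eq_sum_card_commonNeighbors (m : ℕ) :
    ∑ y, #{x | R x y} ^ m = ∑ t : Fin m → α, #(commonNeighbors R t) := by
  classical
  have hpow (y : α) : #{x | R x y} ^ m = #{t : Fin m → α | ∀ i, R (t i) y} := by
    rw [← Fintype.card_piFinset_const]
    congr 1
    ext t
    simp [Fintype.mem_piFinset]
  simp_rw [hpow]
  exact (sum_card_bipartiteAbove_eq_sum_card_bipartiteBelow _).symm

theorem sum_card_filter_rel_eq_card :
    ∑ y, #{x | R x y} = #{p : α × α | R p.1 p.2} := by
  simp_rw [card_filter]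
  rw [Fintype.sum_prod_type_right]

end CommonNeighbors

section NonInjective

variable {α : Type*} [Fintype α] [DecidableEq α] {m : ℕ}

theorem card_filter_apply_eq_apply_le {i j : Fin m} (hij : i ≠ j) :
    #{t : Fin m → α | t i = t j} ≤ Fintype.card α ^ (m - 1) := by
  have hcard : Fintype.card ({k : Fin m // k ≠ j} → α) = Fintype.card α ^ (m - 1) := by
    rw [Fintype.card_fun, Fintype.card_subtype_compl, Fintype.card_subtype_eq, Fintype.card_fin]
  rw [← hcard, ← card_univ]
  refine card_le_card_of_injOn (fun t k => t k.1) (fun _ _ => mem_univ _) ?_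
  intro t₁ h₁ t₂ h₂ heq
  simp only [coe_filter, Set.mem_ofPred_eq, mem_univ, true_and] at h₁ h₂
  funext k
  by_cases hk : k = j
  · subst hk
    rw [← h₁, ← h₂]
    exact congrFun heq ⟨i, hij⟩
  · exact congrFun heq ⟨k, hk⟩

theorem card_filter_not_injective_le :
    #{t : Fin m → α | ¬ Injective t} ≤ m * (m - 1) * Fintype.card α ^ (m - 1) := by
  have hsub : ({t | ¬ Injective t} : Finset (Fin m → α))
      ⊆ (univ : Finset (Fin m)).offDiag.biUnion fun ij => {t : Fin m → α | t ij.1 = t ij.2} := by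
    intro t ht
    obtain ⟨i, j, hij, hne⟩ := not_injective_iff.mp (mem_filter.mp ht).2
    simpa using ⟨i, j, hne, hij⟩
  calc #{t : Fin m → α | ¬ Injective t}
      ≤ ∑ ij ∈ (univ : Finset (Fin m)).offDiag, #{t : Fin m → α | t ij.1 = t ij.2} :=
        (card_le_card hsub).trans card_biUnion_le
    _ ≤ ∑ _ij ∈ (univ : Finset (Fin m)).offDiag, Fintype.card α ^ (m - 1) :=
        sum_le_sum fun ij hij => card_filter_apply_eq_apply_le (mem_offDiag.mp hij).2.2
    _ = m * (m - 1) * Fintype.card α ^ (m - 1) := by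
        rw [sum_const, smul_eq_mul, offDiag_card, card_univ, Fintype.card_fin, Nat.mul_sub_one]

end NonInjective

section Dense

variable {α : Type*} [Fintype α] [DecidableEq α] (R : α → α → Prop) [DecidableRel R] {m n : ℕ}

theorem card_commonNeighbors_lt_of_forall_exists_not_rel
    (hR : ∀ M N : Finset α, #M = m → #N = n → ∃ x ∈ M, ∃ y ∈ N, ¬ R x y)
    {t : Fin m → α} (ht : Injective t) : #(commonNeighbors R t) < n := by
  by_contra! hn
  obtain ⟨N, hN, hNcard⟩ := exists_subset_card_eq hn
  obtain ⟨x, hx, y, hy, hxy⟩ := hR (univ.image t) N (by simp [card_image_of_injective _ ht]) hNcard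
  obtain ⟨i, -, rfl⟩ := mem_image.mp hx
  exact hxy ((mem_filter.mp (hN hy)).2 i)

theorem sum_card_commonNeighbors_le (hmn : m ≤ n)
    (hR : ∀ t : Fin m → α, Injective t → #(commonNeighbors R t) < n) :
    ∑ t : Fin m → α, #(commonNeighbors R t) ≤ 2 ^ m * (n - 1) * Fintype.card α ^ m := by
  set Q := Fintype.card α
  have hinj : ∑ t : Fin m → α with Injective t, #(commonNeighbors R t) ≤ (n - 1) * Q ^ m :=
    calc _ ≤ ∑ t : Fin m → α with Injective t, (n - 1) :=
          sum_le_sum fun t ht => Nat.le_sub_one_of_lt (hR t (mem_filter.mp ht).2)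
      _ ≤ (n - 1) * Q ^ m := by
          rw [sum_const, smul_eq_mul, mul_comm, ← Fintype.card_pi_const]
          exact Nat.mul_le_mul_left _ (card_le_univ _)
  have hnoninj : ∑ t : Fin m → α with ¬ Injective t, #(commonNeighbors R t) ≤ m * (m - 1) * Q ^ m :=
    calc _ ≤ ∑ t : Fin m → α with ¬ Injective t, Q :=
          sum_le_sum fun t _ => card_le_univ _
      _ ≤ m * (m - 1) * Q ^ (m - 1) * Q := by
          rw [sum_const, smul_eq_mul]
          exact Nat.mul_le_mul_right _ card_filter_not_injective_le
      _ = m * (m - 1) * Q ^ m := by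
          rcases m with _ | k
          · simp
          · rw [Nat.add_sub_cancel, pow_succ, mul_assoc]
  have harith : n - 1 + m * (m - 1) ≤ 2 ^ m * (n - 1) := by
    have h : m * (m - 1) ≤ (2 ^ m - 1) * (n - 1) :=
      Nat.mul_le_mul (by have := m.lt_two_pow_self; omega) (by omega)
    calc n - 1 + m * (m - 1) ≤ n - 1 + (2 ^ m - 1) * (n - 1) := by omega
      _ = 2 ^ m * (n - 1) := by
          rw [add_comm, ← Nat.succ_mul, Nat.succ_eq_add_one, Nat.sub_add_cancel Nat.one_le_two_pow]
  calc ∑ t : Fin m → α, #(commonNeighbors R t)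
      ≤ (n - 1) * Q ^ m + m * (m - 1) * Q ^ m := by
        rw [← sum_filter_add_sum_filter_not _ Injective]
        exact add_le_add hinj hnoninj
    _ = (n - 1 + m * (m - 1)) * Q ^ m := by ring
    _ ≤ 2 ^ m * (n - 1) * Q ^ m := Nat.mul_le_mul_right _ harith

theorem card_rel_pow_le_of_card_commonNeighbors_lt (hm : 0 < m) (hmn : m ≤ n)
    (hR : ∀ t : Fin m → α, Injective t → #(commonNeighbors R t) < n) :
    #{p : α × α | R p.1 p.2} ^ m ≤ 2 ^ m * (n - 1) * Fintype.card α ^ (2 * m - 1) := by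
  obtain ⟨k, rfl⟩ : ∃ k, m = k + 1 := ⟨m - 1, by omega⟩
  calc #{p : α × α | R p.1 p.2} ^ (k + 1)
      = (∑ y, #{x | R x y}) ^ (k + 1) := by rw [sum_card_filter_rel_eq_card]
    _ ≤ Fintype.card α ^ k * ∑ y, #{x | R x y} ^ (k + 1) :=
        pow_sum_le_card_mul_sum_pow (fun _ _ => Nat.zero_le _) k
    _ ≤ Fintype.card α ^ k * (2 ^ (k + 1) * (n - 1) * Fintype.card α ^ (k + 1)) := by
        rw [sum_card_pow_eq_sum_card_commonNeighbors]
        exact Nat.mul_le_mul_left _ (sum_card_commonNeighbors_le R hmn hR)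
    _ = 2 ^ (k + 1) * (n - 1) * Fintype.card α ^ (2 * (k + 1) - 1) := by
        rw [show 2 * (k + 1) - 1 = k + (k + 1) by omega, pow_add]
        ring

theorem card_le_of_dense_of_card_commonNeighbors_lt [Nonempty α] (hm : 0 < m) (hmn : m ≤ n)
    (hR : ∀ t : Fin m → α, Injective t → #(commonNeighbors R t) < n) {δ : ℝ} (hδ : 0 < δ)
    (hdense : δ * Fintype.card α ^ 2 ≤ #{p : α × α | R p.1 p.2}) :
    (Fintype.card α : ℝ) ≤ (2 / δ) ^ m * (n - 1) := by
  set Q : ℝ := (Fintype.card α : ℝ)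
  have hQ : 0 < Q := by simp [Q, Fintype.card_pos]
  have hpow : δ ^ m * Q * Q ^ (2 * m - 1) ≤ 2 ^ m * (n - 1) * Q ^ (2 * m - 1) :=
    calc δ ^ m * Q * Q ^ (2 * m - 1) = (δ * Q ^ 2) ^ m := by
          rw [mul_assoc, ← pow_succ', mul_pow, ← pow_mul, show 2 * m - 1 + 1 = 2 * m by omega]
      _ ≤ (#{p : α × α | R p.1 p.2} : ℝ) ^ m := by gcongr
      _ ≤ 2 ^ m * (n - 1) * Q ^ (2 * m - 1) := by
          have := card_rel_pow_le_of_card_commonNeighbors_lt R hm hmn hR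
          rw [← Nat.cast_le (α := ℝ)] at this
          push_cast [Nat.one_le_of_lt (hm.trans_le hmn)] at this
          exact this
  have hδm : δ ^ m * Q ≤ 2 ^ m * (n - 1) := le_of_mul_le_mul_right hpow (by positivity)
  rw [div_pow, div_mul_eq_mul_div, le_div_iff₀ (by positivity)]
  linarith

end Dense

theorem stmt_0_general
    (𝔛 : ∀ (H : Type) [Group H], Prop)
    (γ : ℝ) (hγ1 : γ < 1)
    (hprob : ∀ (X : Type) [Group X] [Fintype X],
      γ < (Nat.card {p : X × X // 𝔛 (Subgroup.closure ({p.1, p.2} : Set X))} : ℝ) /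
          (Fintype.card X : ℝ) ^ 2 → 𝔛 X)
    (m n : ℕ) (hm : 0 < m) (hmn : m ≤ n)
    (G : Type) [Group G] [Fintype G]
    (hXmn : ∀ M N : Finset G, M.card = m → N.card = n →
      ∃ x ∈ M, ∃ y ∈ N, 𝔛 (Subgroup.closure ({x, y} : Set G)))
    (hG : ¬ 𝔛 G) :
    (Fintype.card G : ℝ) ≤ (2 / (1 - γ)) ^ m * ((n : ℝ) - 1) := by
  classical
  set R : G → G → Prop := fun x y => ¬ 𝔛 (Subgroup.closure ({x, y} : Set G))
  have hgood : (#{p : G × G | 𝔛 (Subgroup.closure ({p.1, p.2} : Set G))} : ℝ)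
      ≤ γ * Fintype.card G ^ 2 := by
    have := mt (hprob G) hG
    rw [not_lt, div_le_iff₀ (by simp [Fintype.card_pos]), Nat.card_eq_fintype_card,
      Fintype.card_subtype] at this
    exact this
  have hsplit : (#{p : G × G | 𝔛 (Subgroup.closure ({p.1, p.2} : Set G))} : ℝ)
      + #{p : G × G | R p.1 p.2} = Fintype.card G ^ 2 := by
    rw [sq, ← Nat.cast_mul, ← Fintype.card_prod, ← card_univ]
    exact_mod_cast card_filter_add_card_filter_not _
  refine card_le_of_dense_of_card_commonNeighbors_lt R hm hmn
    (fun t ht => card_commonNeighbors_lt_of_forall_exists_not_rel R ?_ ht) (sub_pos.2 hγ1) ?_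
  · simpa [R] using hXmn
  · linarith

/-- If `𝔛` is a class of finite groups (a property closed under
isomorphism) with the property that any finite group in which two random elements
generate an `𝔛`-group with probability greater than `γ` lies in `𝔛`, and `G` is a
finite group satisfying the condition `𝔛(m,n)` but not in `𝔛`, then
`|G| ≤ (2/(1-γ))^m * (n-1)`. -/
theorem stmt_0
    (𝔛 : ∀ (H : Type) [Group H], Prop)
    (hiso : ∀ (H K : Type) [Group H] [Group K] [Finite H] [Finite K],
      (H ≃* K) → 𝔛 H → 𝔛 K)
    (γ : ℝ) (hγ0 : 0 ≤ γ) (hγ1 : γ < 1)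
    (hprob : ∀ (X : Type) [Group X] [Fintype X],
      γ < (Nat.card {p : X × X // 𝔛 (Subgroup.closure ({p.1, p.2} : Set X))} : ℝ) /
          (Fintype.card X : ℝ) ^ 2 → 𝔛 X)
    (m n : ℕ) (hm : 0 < m) (hn : 0 < n) (hmn : m ≤ n)
    (G : Type) [Group G] [Fintype G]
    (hXmn : ∀ M N : Finset G, M.card = m → N.card = n →
      ∃ x ∈ M, ∃ y ∈ N, 𝔛 (Subgroup.closure ({x, y} : Set G)))
    (hG : ¬ 𝔛 G) :
    (Fintype.card G : ℝ) ≤ (2 / (1 - γ)) ^ m * ((n : ℝ) - 1) :=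
  stmt_0_general 𝔛 γ hγ1 hprob m n hm hmn G hXmn hG
end

section
/- Let m ≤ n be positive integers and let G be a finite group of even order. If for every two subsets M and N of G of cardinalities m and n, respectively, there exist x ∈ M and y ∈ N such that the subgroup ⟨x, y⟩ has odd order, then |G| ≤ (8/3)^m · (n-1). -/
/-!
If `n ≤ |G|`, the hypothesis forces fewer than `m` elements of even order: otherwise take `M`
to consist of such elements, and any `⟨x, y⟩` with `x ∈ M` has even order. Let `t` be an
involution and `E` the set of elements of even order. The conjugacy class of `t` lies in `E`,
so `|G| ≤ |C(t)| |E|`; and `C(t) ⊆ E ∪ tE`, since for odd-order `c ∈ C(t)` the product `tc`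
has order `2 · orderOf c`. Hence `|G| ≤ 2 |E|² ≤ 2 (m-1)²`, which is at most `(8/3)^m (n-1)`.
-/

open Finset Subgroup Pointwise

variable {G : Type*} [Group G]

theorem even_natCard_of_even_orderOf_mem {H : Subgroup G} {x : G} (hx : x ∈ H)
    (hx_even : Even (orderOf x)) : Even (Nat.card H) :=
  even_iff_two_dvd.2 (hx_even.two_dvd.trans (H.orderOf_dvd_natCard hx))

theorem even_orderOf_mul_of_commute {t c : G} (htc : Commute t c) (ht : orderOf t = 2)
    (hc : Odd (orderOf c)) : Even (orderOf (t * c)) := by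
  rw [htc.orderOf_mul_eq_mul_orderOf_of_coprime (ht ▸ Nat.coprime_two_left.2 hc), ht]
  exact even_two_mul _

section Finite

variable (G) [Fintype G]

noncomputable def evenOrderElements : Finset G := {x | Even (orderOf x)}

variable {G}

@[simp]
theorem mem_evenOrderElements {x : G} : x ∈ evenOrderElements G ↔ Even (orderOf x) := by
  simp [evenOrderElements]

theorem card_evenOrderElements_lt {m n : ℕ} (hn : n ≤ Fintype.card G)
    (h : ∀ M N : Finset G, M.card = m → N.card = n →
      ∃ x ∈ M, ∃ y ∈ N, Odd (Nat.card (closure ({x, y} : Set G)))) :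
    #(evenOrderElements G) < m := by
  by_contra! hm
  obtain ⟨M, hME, hM⟩ := exists_subset_card_eq hm
  obtain ⟨N, -, hN⟩ := exists_subset_card_eq (s := univ) (by simpa using hn)
  obtain ⟨x, hxM, y, -, hodd⟩ := h M N hM hN
  exact Nat.not_even_iff_odd.2 hodd <| even_natCard_of_even_orderOf_mem
    (subset_closure (Set.mem_insert x {y})) (mem_evenOrderElements.1 (hME hxM))

theorem natCard_le_natCard_centralizer_mul {t : G} (ht : Even (orderOf t)) :
    Nat.card G ≤ Nat.card (centralizer {t}) * #(evenOrderElements G) := by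
  rw [nat_card_centralizer_nat_card_stabilizer, Nat.card_congr ConjAct.toConjAct.toEquiv,
    ← (MulAction.stabilizer (ConjAct G) t).card_mul_index, MulAction.index_stabilizer]
  gcongr
  rw [← Set.ncard_coe_finset]
  refine Set.ncard_le_ncard (fun x hx => ?_)
  obtain ⟨c, rfl⟩ := isConj_iff.1 (ConjAct.mem_orbit_conjAct.1 hx).symm
  simpa [← (SemiconjBy.conj_mk c t).orderOf_eq] using ht

theorem natCard_centralizer_le_two_mul {t : G} (ht : orderOf t = 2) :
    Nat.card (centralizer {t}) ≤ 2 * #(evenOrderElements G) := by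
  classical
  have hsub :
      (centralizer {t} : Set G) ⊆ ↑(evenOrderElements G ∪ t⁻¹ • evenOrderElements G) := by
    intro c hc
    rcases Nat.even_or_odd (orderOf c) with hc_even | hc_odd
    · simp [hc_even]
    · have htc : Commute t c := (mem_centralizer_singleton_iff.1 hc).symm
      refine mem_union_right _ (mem_smul_finset.2 ⟨t * c, ?_, by simp⟩)
      exact mem_evenOrderElements.2 (even_orderOf_mul_of_commute htc ht hc_odd)
  calc Nat.card (centralizer {t})
        ≤ #(evenOrderElements G ∪ t⁻¹ • evenOrderElements G) := by
        rw [← SetLike.coe_sort_coe, Nat.card_coe_set_eq, ← Set.ncard_coe_finset]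
        exact Set.ncard_le_ncard hsub
    _ ≤ 2 * #(evenOrderElements G) := by
        grw [card_union_le, card_smul_finset]; omega

theorem natCard_le_two_mul_sq {t : G} (ht : orderOf t = 2) :
    Nat.card G ≤ 2 * #(evenOrderElements G) ^ 2 :=
  calc Nat.card G ≤ Nat.card (centralizer {t}) * #(evenOrderElements G) :=
        natCard_le_natCard_centralizer_mul (ht ▸ even_two)
    _ ≤ 2 * #(evenOrderElements G) * #(evenOrderElements G) := by
        grw [natCard_centralizer_le_two_mul ht]
    _ = 2 * #(evenOrderElements G) ^ 2 := by ring

end Finite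

theorem two_mul_sq_le_eight_div_three_pow_mul {k m n : ℕ} (hkm : k < m) (hmn : m ≤ n) :
    (2 * k ^ 2 : ℝ) ≤ (8 / 3 : ℝ) ^ m * ((n : ℝ) - 1) := by
  have hk_pow : (2 * k : ℝ) ≤ 2 ^ m := by
    have : 2 * k ≤ 2 ^ m :=
      calc 2 * k ≤ 2 * 2 ^ k := by grw [(Nat.lt_two_pow_self (n := k)).le]
        _ = 2 ^ (k + 1) := by ring
        _ ≤ 2 ^ m := Nat.pow_le_pow_right two_pos hkm
    exact_mod_cast this
  have hk_n : (k : ℝ) ≤ n - 1 := by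
    have : k + 1 ≤ n := by omega
    rw [le_sub_iff_add_le]; exact_mod_cast this
  calc (2 * k ^ 2 : ℝ) = (2 * k) * k := by ring
    _ ≤ (8 / 3) ^ m * (n - 1) := by
      gcongr
      exact hk_pow.trans (pow_le_pow_left₀ (by norm_num) (by norm_num) m)

theorem stmt_4_general
    (m n : ℕ) (hmn : m ≤ n)
    (G : Type) [Group G] [Fintype G]
    (hG : Even (Fintype.card G))
    (hXmn : ∀ M N : Finset G, M.card = m → N.card = n →
      ∃ x ∈ M, ∃ y ∈ N, Odd (Nat.card (Subgroup.closure ({x, y} : Set G)))) :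
    (Fintype.card G : ℝ) ≤ (8 / 3 : ℝ) ^ m * ((n : ℝ) - 1) := by
  rcases lt_or_ge (Fintype.card G) n with hsmall | hlarge
  · have hcard : (Fintype.card G : ℝ) ≤ n - 1 := by
      rw [le_sub_iff_add_le]; exact_mod_cast hsmall
    exact hcard.trans (le_mul_of_one_le_left (by linarith) (one_le_pow₀ (by norm_num)))
  · obtain ⟨t, ht⟩ := exists_prime_orderOf_dvd_card 2 hG.two_dvd
    have hcard : Fintype.card G ≤ 2 * #(evenOrderElements G) ^ 2 :=
      Nat.card_eq_fintype_card (α := G) ▸ natCard_le_two_mul_sq ht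
    calc (Fintype.card G : ℝ) ≤ 2 * #(evenOrderElements G) ^ 2 := by exact_mod_cast hcard
      _ ≤ _ := two_mul_sq_le_eight_div_three_pow_mul (card_evenOrderElements_lt hlarge hXmn) hmn

/-- Let `m ≤ n` be positive integers and `G` a finite group of even
order. If for every two subsets `M`, `N` of `G` of cardinalities `m` and `n` there
exist `x ∈ M`, `y ∈ N` such that `⟨x, y⟩` has odd order, then
`|G| ≤ (8/3)^m * (n-1)`. -/
theorem stmt_4
    (m n : ℕ) (hm : 0 < m) (hn : 0 < n) (hmn : m ≤ n)
    (G : Type) [Group G] [Fintype G]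
    (hG : Even (Fintype.card G))
    (hXmn : ∀ M N : Finset G, M.card = m → N.card = n →
      ∃ x ∈ M, ∃ y ∈ N, Odd (Nat.card (Subgroup.closure ({x, y} : Set G)))) :
    (Fintype.card G : ℝ) ≤ (8 / 3 : ℝ) ^ m * ((n : ℝ) - 1) :=
  stmt_4_general m n hmn G hG hXmn
end

section
/- Let 𝔛 be a class of finite groups and suppose there exists a real number γ with 0 ≤ γ < 1 such that: for every finite group X, if the probability that two uniformly randomly chosen elements x, y of X satisfy ⟨x, y⟩ ∈ 𝔛 is greater than γ, then X ∈ 𝔛. Let m ≤ n be positive integers and let G be a finite group satisfying the condition 𝔛(m,n) with G ∉ 𝔛. Then ((n-1)/|G|)^{1/m} + (m-1)/|G| ≥ 1 - γ. -/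
open Finset

/-!
Count the pairs `(x, y)` with `⟨x, y⟩ ∉ 𝔛`. Since `G ∉ 𝔛`, the hypothesis on `γ` forces at least
`(1 - γ)|G|²` of them. On the other hand `𝔛(m,n)` says that these pairs contain no rectangle
`M × N` with `|M| = m`, `|N| = n`, so every `m`-set has fewer than `n` common "non-neighbours".
Double counting `m`-subsets of non-neighbourhoods gives `∑_y C(d y, m) ≤ (n - 1) C(|G|, m)`, and
the power-mean inequality turns this into the Kővári–Sós–Turán bound
`∑_y d y ≤ ((n - 1)/|G|)^(1/m) |G|² + (m - 1)|G|` on the number of such pairs.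
-/

theorem sum_choose_card_le_of_card_supersets_le {α β : Type*} [Fintype α] [Fintype β]
    [DecidableEq α] (N : β → Finset α) {m k : ℕ}
    (h : ∀ S : Finset α, #S = m → #{y | S ⊆ N y} ≤ k) :
    ∑ y, (#(N y)).choose m ≤ k * (Fintype.card α).choose m := by
  let sub : β → Finset α → Prop := fun y S => S ⊆ N y
  calc ∑ y, (#(N y)).choose m
      = ∑ y, #((univ.powersetCard m).bipartiteAbove sub y) := by
        refine sum_congr rfl fun y _ => ?_
        rw [← card_powersetCard, bipartiteAbove]
        congr 1
        ext S
        simp [sub, and_comm]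
    _ = ∑ S ∈ univ.powersetCard m, #(univ.bipartiteBelow sub S) :=
        sum_card_bipartiteAbove_eq_sum_card_bipartiteBelow sub
    _ ≤ ∑ _S ∈ univ.powersetCard m, k :=
        sum_le_sum fun S hS => h S (mem_powersetCard.mp hS).2
    _ = k * (Fintype.card α).choose m := by
        rw [sum_const, card_powersetCard, card_univ, smul_eq_mul, mul_comm]

theorem card_filter_forall_not_le {α β : Type*} [Fintype β] {r : α → β → Prop}
    [DecidableRel r] {m n : ℕ}
    (h : ∀ (S : Finset α) (T : Finset β), #S = m → #T = n → ∃ x ∈ S, ∃ y ∈ T, r x y)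
    {S : Finset α} (hS : #S = m) : #{y | ∀ x ∈ S, ¬ r x y} ≤ n - 1 := by
  by_contra! hlt
  obtain ⟨T, hTsub, hT⟩ :=
    exists_subset_card_eq (show n ≤ #{y | ∀ x ∈ S, ¬ r x y} by omega)
  obtain ⟨x, hx, y, hy, hxy⟩ := h S T hS hT
  exact (mem_filter.mp (hTsub hy)).2 x hx hxy

theorem sum_pow_tsub_le_of_sum_choose_le {ι : Type*} (s : Finset ι) (d : ι → ℕ) {m k a : ℕ}
    (h : ∑ i ∈ s, (d i).choose m ≤ k * a.choose m) :
    ∑ i ∈ s, (d i + 1 - m) ^ m ≤ k * a ^ m :=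
  calc ∑ i ∈ s, (d i + 1 - m) ^ m
      ≤ ∑ i ∈ s, m.factorial * (d i).choose m := sum_le_sum fun i _ =>
        (Nat.pow_sub_le_descFactorial _ _).trans
          (Nat.descFactorial_eq_factorial_mul_choose _ _).le
    _ ≤ m.factorial * (k * a.choose m) := by
        rw [← mul_sum]
        exact Nat.mul_le_mul_left _ h
    _ = k * a.descFactorial m := by
        rw [Nat.descFactorial_eq_factorial_mul_choose]
        ring
    _ ≤ k * a ^ m := Nat.mul_le_mul_left _ (Nat.descFactorial_le_pow a m)

theorem sum_le_of_sum_pow_le {ι : Type*} [Fintype ι] [Nonempty ι] {z : ι → ℝ}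
    (hz : ∀ i, 0 ≤ z i) {m : ℕ} (hm : m ≠ 0) {c a : ℝ} (hc : 0 ≤ c) (ha : 0 ≤ a)
    (h : ∑ i, z i ^ m ≤ c * a ^ m) :
    ∑ i, z i ≤ (c / Fintype.card ι) ^ (1 / (m : ℝ)) * a * Fintype.card ι := by
  obtain ⟨k, rfl⟩ := Nat.exists_eq_succ_of_ne_zero hm
  have hg : (0 : ℝ) < Fintype.card ι := by exact_mod_cast Fintype.card_pos
  refine le_of_pow_le_pow_left₀ hm (by positivity) ?_
  calc (∑ i, z i) ^ (k + 1)
      ≤ (Fintype.card ι : ℝ) ^ k * ∑ i, z i ^ (k + 1) := by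
        simpa using pow_sum_le_card_mul_sum_pow (s := univ) (fun i _ => hz i) k
    _ ≤ (Fintype.card ι : ℝ) ^ k * (c * a ^ (k + 1)) := by gcongr
    _ = ((c / Fintype.card ι) ^ (1 / ((k + 1 : ℕ) : ℝ)) * a * Fintype.card ι) ^ (k + 1) := by
        rw [mul_pow, mul_pow, one_div, Real.rpow_inv_natCast_pow (by positivity) hm]
        field_simp
        ring

theorem sum_le_of_sum_choose_le {ι : Type*} [Fintype ι] [Nonempty ι] (d : ι → ℕ) {m k a : ℕ}
    (hm : 0 < m) (h : ∑ i, (d i).choose m ≤ k * a.choose m) :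
    (∑ i, d i : ℝ) ≤
      ((k : ℝ) / Fintype.card ι) ^ (1 / (m : ℝ)) * a * Fintype.card ι +
        ((m : ℝ) - 1) * Fintype.card ι := by
  have hpow : ∑ i, ((d i + 1 - m : ℕ) : ℝ) ^ m ≤ k * (a : ℝ) ^ m := by
    exact_mod_cast sum_pow_tsub_le_of_sum_choose_le univ d h
  have hsplit : ∀ i, (d i : ℝ) ≤ ((d i + 1 - m : ℕ) : ℝ) + ((m : ℝ) - 1) := by
    intro i
    have : d i ≤ (d i + 1 - m) + (m - 1) := by omega
    rw [← Nat.cast_pred hm]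
    exact_mod_cast this
  calc (∑ i, d i : ℝ)
      ≤ ∑ i, (((d i + 1 - m : ℕ) : ℝ) + ((m : ℝ) - 1)) := sum_le_sum fun i _ => hsplit i
    _ = ∑ i, ((d i + 1 - m : ℕ) : ℝ) + ((m : ℝ) - 1) * Fintype.card ι := by
        rw [sum_add_distrib, sum_const, card_univ, nsmul_eq_mul, mul_comm]
    _ ≤ _ := by
        gcongr
        exact sum_le_of_sum_pow_le (fun i => Nat.cast_nonneg _) hm.ne' (Nat.cast_nonneg k)
          (Nat.cast_nonneg a) hpow

theorem card_not_rel_le {α β : Type*} [Fintype α] [Fintype β] [Nonempty β]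
    {r : α → β → Prop} {m n : ℕ} (hm : 0 < m) (hn : 0 < n)
    (h : ∀ (S : Finset α) (T : Finset β), #S = m → #T = n → ∃ x ∈ S, ∃ y ∈ T, r x y) :
    (Nat.card {p : α × β // ¬ r p.1 p.2} : ℝ) ≤
      (((n : ℝ) - 1) / Fintype.card β) ^ (1 / (m : ℝ)) * Fintype.card α * Fintype.card β +
        ((m : ℝ) - 1) * Fintype.card β := by
  classical
  have hcard : Nat.card {p : α × β // ¬ r p.1 p.2} = ∑ y, #{x | ¬ r x y} := by
    simp only [Nat.card_eq_fintype_card, Fintype.card_subtype, card_filter,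
      Fintype.sum_prod_type_right]
  have hchoose : ∑ y, (#{x | ¬ r x y}).choose m ≤ (n - 1) * (Fintype.card α).choose m :=
    sum_choose_card_le_of_card_supersets_le _ fun S hS => by
      convert card_filter_forall_not_le h hS using 3
      simp [subset_iff]
  rw [hcard, Nat.cast_sum, ← Nat.cast_pred hn]
  exact sum_le_of_sum_choose_le _ hm hchoose

theorem one_sub_mul_card_sq_le_card_not {X : Type*} [Fintype X] [Nonempty X]
    (P : X × X → Prop) {γ : ℝ} (h : (Nat.card {p // P p} : ℝ) / Fintype.card X ^ 2 ≤ γ) :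
    (1 - γ) * Fintype.card X ^ 2 ≤ Nat.card {p // ¬ P p} := by
  classical
  have htotal : (Nat.card {p // P p} : ℝ) + Nat.card {p // ¬ P p} = Fintype.card X ^ 2 := by
    simp only [Nat.card_eq_fintype_card, Fintype.card_subtype]
    exact_mod_cast (card_filter_add_card_filter_not (s := univ) P).trans
      (by rw [card_univ, Fintype.card_prod, sq])
  rw [div_le_iff₀ (by positivity)] at h
  linarith

theorem stmt_8_general
    (𝔛 : ∀ (H : Type) [Group H], Prop)
    (γ : ℝ)
    (hprob : ∀ (X : Type) [Group X] [Fintype X],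
      γ < (Nat.card {p : X × X // 𝔛 (Subgroup.closure ({p.1, p.2} : Set X))} : ℝ) /
          (Fintype.card X : ℝ) ^ 2 → 𝔛 X)
    (m n : ℕ) (hm : 0 < m) (hn : 0 < n)
    (G : Type) [Group G] [Fintype G]
    (hXmn : ∀ M N : Finset G, M.card = m → N.card = n →
      ∃ x ∈ M, ∃ y ∈ N, 𝔛 (Subgroup.closure ({x, y} : Set G)))
    (hG : ¬ 𝔛 G) :
    1 - γ ≤ (((n : ℝ) - 1) / (Fintype.card G : ℝ)) ^ ((1 : ℝ) / (m : ℝ)) +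
      ((m : ℝ) - 1) / (Fintype.card G : ℝ) := by
  have hlower := one_sub_mul_card_sq_le_card_not
    (fun p : G × G => 𝔛 (Subgroup.closure {p.1, p.2})) (not_lt.mp fun h => hG (hprob G h))
  have hupper := card_not_rel_le (r := fun x y : G => 𝔛 (Subgroup.closure {x, y})) hm hn hXmn
  have hg : (0 : ℝ) < Fintype.card G := by exact_mod_cast Fintype.card_pos
  calc 1 - γ
      ≤ (Nat.card {p : G × G // ¬ 𝔛 (Subgroup.closure {p.1, p.2})} : ℝ) /
          Fintype.card G ^ 2 := by
        rwa [le_div_iff₀ (by positivity)]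
    _ ≤ _ := by
        rw [div_le_iff₀ (by positivity)]
        refine hupper.trans_eq ?_
        field_simp

/-- If `𝔛` is a class of finite groups with the property that any
finite group in which two random elements generate an `𝔛`-group with probability
greater than `γ` lies in `𝔛`, `m ≤ n` are positive integers and `G` is a finite
group satisfying the condition `𝔛(m,n)` but not in `𝔛`, then
`((n-1)/|G|)^(1/m) + (m-1)/|G| ≥ 1 - γ`. -/
theorem stmt_8
    (𝔛 : ∀ (H : Type) [Group H], Prop)
    (hiso : ∀ (H K : Type) [Group H] [Group K] [Finite H] [Finite K],
      (H ≃* K) → 𝔛 H → 𝔛 K)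
    (γ : ℝ) (hγ0 : 0 ≤ γ) (hγ1 : γ < 1)
    (hprob : ∀ (X : Type) [Group X] [Fintype X],
      γ < (Nat.card {p : X × X // 𝔛 (Subgroup.closure ({p.1, p.2} : Set X))} : ℝ) /
          (Fintype.card X : ℝ) ^ 2 → 𝔛 X)
    (m n : ℕ) (hm : 0 < m) (hn : 0 < n) (hmn : m ≤ n)
    (G : Type) [Group G] [Fintype G]
    (hXmn : ∀ M N : Finset G, M.card = m → N.card = n →
      ∃ x ∈ M, ∃ y ∈ N, 𝔛 (Subgroup.closure ({x, y} : Set G)))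
    (hG : ¬ 𝔛 G) :
    1 - γ ≤ (((n : ℝ) - 1) / (Fintype.card G : ℝ)) ^ ((1 : ℝ) / (m : ℝ)) +
      ((m : ℝ) - 1) / (Fintype.card G : ℝ) :=
  stmt_8_general 𝔛 γ hprob m n hm hn G hXmn hG
end
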